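/- arXiv:2401.14323 — 2 statements merged into one kernel-verified Lean document; each statement's English description precedes it below -/
import Mathlib

section
/- Corollary 1: If R ≥ max_{s∈S} H(X|Y_s), then the lower-bound expression and the upper-bound expression of Theorem 1 coincide and both equal H(X); that is, L(R) = M(R) = H(X). -/
open scoped BigOperators Classical

noncomputable section

namespace CRGen

/-- A probability mass function on a finite type. -/
def IsPMF {α : Type*} [Fintype α] (p : α → ℝ) : Prop :=
  (∀ a, 0 ≤ p a) ∧ ∑ a, p a = 1

/-- Shannon entropy to base 2 of a pmf on a finite type (`0 log 0 = 0`). -/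
def entPMF {α : Type*} [Fintype α] (p : α → ℝ) : ℝ :=
  - ∑ a, p a * Real.logb 2 (p a)

/-- Distribution (pushforward pmf) of a random variable on a finite probability
space with pmf `μ`. -/
def dist {Ω α : Type*} [Fintype Ω] (μ : Ω → ℝ) (X : Ω → α) : α → ℝ :=
  fun a => ∑ ω, if X ω = a then μ ω else 0

/-- Shannon entropy (base 2) of a random variable. -/
def H {Ω α : Type*} [Fintype Ω] [Fintype α] (μ : Ω → ℝ) (X : Ω → α) : ℝ :=
  entPMF (dist μ X)

/-- Conditional entropy `H(X|Y)`. -/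
def condH {Ω α β : Type*} [Fintype Ω] [Fintype α] [Fintype β]
    (μ : Ω → ℝ) (X : Ω → α) (Y : Ω → β) : ℝ :=
  H μ (fun ω => (X ω, Y ω)) - H μ Y

/-- Mutual information `I(X;Y)`. -/
def MI {Ω α β : Type*} [Fintype Ω] [Fintype α] [Fintype β]
    (μ : Ω → ℝ) (X : Ω → α) (Y : Ω → β) : ℝ :=
  H μ X + H μ Y - H μ (fun ω => (X ω, Y ω))

/-- Conditional mutual information `I(X;Y|Z)`. -/
def condMI {Ω α β γ : Type*} [Fintype Ω] [Fintype α] [Fintype β] [Fintype γ]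
    (μ : Ω → ℝ) (X : Ω → α) (Y : Ω → β) (Z : Ω → γ) : ℝ :=
  H μ (fun ω => (X ω, Z ω)) + H μ (fun ω => (Y ω, Z ω))
    - H μ (fun ω => (X ω, (Y ω, Z ω))) - H μ Z

/-- First marginal of a joint pmf on a product. -/
def margFst {α β : Type*} [Fintype α] [Fintype β] (q : α × β → ℝ) : α → ℝ :=
  fun a => ∑ b, q (a, b)

/-- Second marginal of a joint pmf on a product. -/
def margSnd {α β : Type*} [Fintype α] [Fintype β] (q : α × β → ℝ) : β → ℝ :=
  fun b => ∑ a, q (a, b)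

/-- Mutual information of a joint pmf on a product. -/
def miPMF {α β : Type*} [Fintype α] [Fintype β] (q : α × β → ℝ) : ℝ :=
  entPMF (margFst q) + entPMF (margSnd q) - entPMF q

/-- The lower-bound expression `L(R)` of Theorem 1: the supremum of `I(U;X)` over
all finite sets `𝒰` and channels `W = P_{U|X}` from `𝒳` to `𝒰` such that for
every `s ∈ S` the triple `(U, X, Y_s)` has joint law `P_{U|X}·P_{XY_s}` and
`I(U;X) − min_{s∈S} I(U;Y_s) ≤ R`. -/
def LB {S 𝒳 𝒴 : Type} [Fintype S] [Fintype 𝒳] [Fintype 𝒴] [Nonempty S]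
    (P : S → 𝒳 × 𝒴 → ℝ) (PX : 𝒳 → ℝ) (R : ℝ) : ℝ :=
  sSup { r : ℝ | ∃ (𝒰 : Type) (_ : Fintype 𝒰) (W : 𝒳 → 𝒰 → ℝ),
    (∀ x u, 0 ≤ W x u) ∧ (∀ x, ∑ u, W x u = 1) ∧
    miPMF (fun p : 𝒰 × 𝒳 => W p.2 p.1 * PX p.2)
      - Finset.univ.inf' Finset.univ_nonempty
          (fun s : S => miPMF (fun p : 𝒰 × 𝒴 => ∑ x, W x p.1 * P s (x, p.2))) ≤ R ∧
    r = miPMF (fun p : 𝒰 × 𝒳 => W p.2 p.1 * PX p.2) }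

/-- For a single source state with joint pmf `Q` on `𝒳 × 𝒴` (with `𝒳`-marginal
`PX`): the supremum of `I(U;X)` over all finite sets `𝒰` and channels
`W = P_{U|X}` such that `(U,X,Y)` has joint law `P_{U|X}·Q` and
`I(U;X) − I(U;Y) ≤ R`. -/
def Msup {𝒳 𝒴 : Type} [Fintype 𝒳] [Fintype 𝒴]
    (Q : 𝒳 × 𝒴 → ℝ) (PX : 𝒳 → ℝ) (R : ℝ) : ℝ :=
  sSup { r : ℝ | ∃ (𝒰 : Type) (_ : Fintype 𝒰) (W : 𝒳 → 𝒰 → ℝ),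
    (∀ x u, 0 ≤ W x u) ∧ (∀ x, ∑ u, W x u = 1) ∧
    miPMF (fun p : 𝒰 × 𝒳 => W p.2 p.1 * PX p.2)
      - miPMF (fun p : 𝒰 × 𝒴 => ∑ x, W x p.1 * Q (x, p.2)) ≤ R ∧
    r = miPMF (fun p : 𝒰 × 𝒳 => W p.2 p.1 * PX p.2) }

/-- The upper-bound expression `M(R)` of Theorem 1:
`min_{s ∈ S}` of the per-state supremum. -/
def MB {S 𝒳 𝒴 : Type} [Fintype S] [Fintype 𝒳] [Fintype 𝒴] [Nonempty S]
    (P : S → 𝒳 × 𝒴 → ℝ) (PX : 𝒳 → ℝ) (R : ℝ) : ℝ :=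
  Finset.univ.inf' Finset.univ_nonempty fun s : S => Msup (P s) PX R

/-- Monotonicity: joint entropy dominates the first-marginal entropy. -/
lemma entPMF_margFst_le {α β : Type*} [Fintype α] [Fintype β]
    (q : α × β → ℝ) (hq : ∀ p, 0 ≤ q p) :
    entPMF (margFst q) ≤ entPMF q := by
  unfold entPMF margFst
  rw [neg_le_neg_iff, Fintype.sum_prod_type]
  apply Finset.sum_le_sum
  intro a _
  rw [Finset.sum_mul]
  apply Finset.sum_le_sum
  intro b _
  rcases eq_or_lt_of_le (hq (a, b)) with h0 | h0
  · simp [← h0]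
  · apply mul_le_mul_of_nonneg_left _ (le_of_lt h0)
    apply Real.logb_le_logb_of_le one_lt_two h0
    exact Finset.single_le_sum (fun c _ => hq (a, c)) (Finset.mem_univ b)

lemma miPMF_le_entPMF_margSnd {α β : Type*} [Fintype α] [Fintype β]
    (q : α × β → ℝ) (hq : ∀ p, 0 ≤ q p) :
    miPMF q ≤ entPMF (margSnd q) := by
  have := entPMF_margFst_le q hq
  unfold miPMF
  linarith

/-- Corollary 1: if `R ≥ max_{s∈S} H(X|Y_s)` then the lower- and upper-bound
expressions of Theorem 1 coincide, and both equal `H(X)`. -/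
theorem corollary1_bounds_coincide
    {S 𝒳 𝒴 : Type} [Fintype S] [Fintype 𝒳] [Fintype 𝒴] [Nonempty S]
    (P : S → 𝒳 × 𝒴 → ℝ) (PX : 𝒳 → ℝ)
    (hP : ∀ s, IsPMF (P s)) (hPX : IsPMF PX)
    (hmarg : ∀ s x, ∑ y, P s (x, y) = PX x)
    (R : ℝ) (hR : 0 < R)
    (hRbig : Finset.univ.sup' Finset.univ_nonempty
        (fun s : S => entPMF (P s) - entPMF (margSnd (P s))) ≤ R) :
    LB P PX R = entPMF PX ∧ MB P PX R = entPMF PX := by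
  classical
  set c := entPMF PX with hc
  set W0 : 𝒳 → 𝒳 → ℝ := fun x u => if u = x then 1 else 0 with hW0def
  have hW0nn : ∀ x u, 0 ≤ W0 x u := by
    intro x u; simp only [W0]; split <;> norm_num
  have hW0sum : ∀ x, ∑ u, W0 x u = 1 := by intro x; simp [W0]
  have hdiag : ∀ (u : 𝒳) (f : ℝ → ℝ), f 0 = 0 →
      ∑ x, f (W0 x u * PX x) = f (PX u) := by
    intro u f hf
    rw [Finset.sum_eq_single u]
    · simp [W0]
    · intro x _ hx; simp [W0, Ne.symm hx, hf]
    · simp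
  have hfst : margFst (fun p : 𝒳 × 𝒳 => W0 p.2 p.1 * PX p.2) = PX := by
    funext u; exact hdiag u (fun t => t) rfl
  have hsnd : margSnd (fun p : 𝒳 × 𝒳 => W0 p.2 p.1 * PX p.2) = PX := by
    funext x
    show (∑ u, W0 x u * PX x) = PX x
    rw [← Finset.sum_mul, hW0sum x, one_mul]
  have hent : entPMF (fun p : 𝒳 × 𝒳 => W0 p.2 p.1 * PX p.2) = entPMF PX := by
    unfold entPMF
    congr 1
    rw [Fintype.sum_prod_type]
    apply Finset.sum_congr rfl
    intro u _
    exact hdiag u (fun t => t * Real.logb 2 t) (by simp)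
  have hqx : miPMF (fun p : 𝒳 × 𝒳 => W0 p.2 p.1 * PX p.2) = c := by
    unfold miPMF
    rw [hfst, hsnd, hent]
    ring
  have hYs : ∀ s, (fun p : 𝒳 × 𝒴 => ∑ x, W0 x p.1 * P s (x, p.2)) = P s := by
    intro s
    funext p
    rw [Finset.sum_eq_single p.1]
    · simp [W0]
    · intro x _ hx; simp [W0, Ne.symm hx]
    · simp
  have hmi : ∀ s, miPMF (P s) = c + entPMF (margSnd (P s)) - entPMF (P s) := by
    intro s
    unfold miPMF
    have h : margFst (P s) = PX := by funext x; exact hmarg s x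
    rw [h]
  have hcon : ∀ s : S, entPMF (P s) - entPMF (margSnd (P s)) ≤ R :=
    fun s => le_trans (Finset.le_sup' (f := fun s : S => entPMF (P s) - entPMF (margSnd (P s))) (Finset.mem_univ s)) hRbig
  have hub : ∀ (𝒰 : Type) (_ : Fintype 𝒰) (W : 𝒳 → 𝒰 → ℝ),
      (∀ x u, 0 ≤ W x u) → (∀ x, ∑ u, W x u = 1) →
      miPMF (fun p : 𝒰 × 𝒳 => W p.2 p.1 * PX p.2) ≤ c := by
    intro 𝒰 _ W hWnn hWs
    have h1 : margSnd (fun p : 𝒰 × 𝒳 => W p.2 p.1 * PX p.2) = PX := by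
      funext x
      show (∑ u, W x u * PX x) = PX x
      rw [← Finset.sum_mul, hWs x, one_mul]
    have h2 := miPMF_le_entPMF_margSnd (fun p : 𝒰 × 𝒳 => W p.2 p.1 * PX p.2)
      (fun p => mul_nonneg (hWnn _ _) (hPX.1 _))
    rw [h1] at h2
    exact h2
  constructor
  · -- LB
    unfold LB
    apply le_antisymm
    · apply csSup_le
      · refine ⟨c, 𝒳, inferInstance, W0, hW0nn, hW0sum, ?_, hqx.symm⟩
        rw [hqx]
        have hle : c - R ≤ Finset.univ.inf' Finset.univ_nonempty
            (fun s : S => miPMF (fun p : 𝒳 × 𝒴 => ∑ x, W0 x p.1 * P s (x, p.2))) := by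
          apply Finset.le_inf'
          intro s _
          rw [hYs s, hmi s]
          have := hcon s
          linarith
        linarith
      · rintro r ⟨𝒰, inst, W, hWnn, hWs, -, rfl⟩
        exact hub 𝒰 inst W hWnn hWs
    · apply le_csSup
      · refine ⟨c, ?_⟩
        rintro r ⟨𝒰, inst, W, hWnn, hWs, -, rfl⟩
        exact hub 𝒰 inst W hWnn hWs
      · refine ⟨𝒳, inferInstance, W0, hW0nn, hW0sum, ?_, hqx.symm⟩
        rw [hqx]
        have hle : c - R ≤ Finset.univ.inf' Finset.univ_nonempty
            (fun s : S => miPMF (fun p : 𝒳 × 𝒴 => ∑ x, W0 x p.1 * P s (x, p.2))) := by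
          apply Finset.le_inf'
          intro s _
          rw [hYs s, hmi s]
          have := hcon s
          linarith
        linarith
  · -- MB
    unfold MB
    have hMs : ∀ s : S, Msup (P s) PX R = c := by
      intro s
      unfold Msup
      apply le_antisymm
      · apply csSup_le
        · refine ⟨c, 𝒳, inferInstance, W0, hW0nn, hW0sum, ?_, hqx.symm⟩
          rw [hqx, hYs s, hmi s]
          have := hcon s
          linarith
        · rintro r ⟨𝒰, inst, W, hWnn, hWs, -, rfl⟩
          exact hub 𝒰 inst W hWnn hWs
      · apply le_csSup
        · refine ⟨c, ?_⟩
          rintro r ⟨𝒰, inst, W, hWnn, hWs, -, rfl⟩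
          exact hub 𝒰 inst W hWnn hWs
        · refine ⟨𝒳, inferInstance, W0, hW0nn, hW0sum, ?_, hqx.symm⟩
          rw [hqx, hYs s, hmi s]
          have := hcon s
          linarith
    rw [show (fun s : S => Msup (P s) PX R) = fun _ : S => c from funext hMs]
    exact Finset.inf'_const _ c


end CRGen
end
end

section
/- Uniform-index form of Lemma 1 (second equality of Lemma 17.12 of Csiszár–Körner): Let R₁, R₂ be finite-valued random variables and X^n = (X₁,…,X_n), Y^n = (Y₁,…,Y_n) finite-valued sequences on a common probability space, and let J be uniformly distributed on {1,…,n} and independent of (R₁, R₂, X^n, Y^n). Set V = (X₁,…,X_{J−1}, Y_{J+1},…,Y_n, R₂, J). Then I(R₁;X^n|R₂) − I(R₁;Y^n|R₂) = n·[ I(R₁;X_J|V) − I(R₁;Y_J|V) ]. -/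
open scoped BigOperators Classical

noncomputable section

namespace CRGen

/-- The (variable-length) prefix `x₁,…,x_{j−1}` of a vector, encoded as a masked
vector: entries at positions `≥ j` are replaced by `none`. -/
def maskPre {𝒳 : Type} {n : ℕ} (xv : Fin n → 𝒳) (j : Fin n) : Fin n → Option 𝒳 :=
  fun i => if (i : ℕ) < (j : ℕ) then some (xv i) else none

/-- The (variable-length) suffix `y_{j+1},…,y_n` of a vector, encoded as a masked
vector: entries at positions `≤ j` are replaced by `none`. -/
def maskSuf {𝒴 : Type} {n : ℕ} (yv : Fin n → 𝒴) (j : Fin n) : Fin n → Option 𝒴 :=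
  fun i => if (j : ℕ) < (i : ℕ) then some (yv i) else none

/-! Write `Vⱼ = (X₁,…,X_{j−1}, Y_{j+1},…,Y_n, R₂, j)` for a fixed index `j` and let
`Sₖ = (X₁,…,Xₖ, Y_{k+1},…,Y_n)` (`splice X Y k`) be the hybrid sequences, so `S₀ ≅ Yⁿ` and
`Sₙ ≅ Xⁿ`. The pair `(Xⱼ, Vⱼ)` carries exactly the information of `(S_{j+1}, R₂)`, and `(Yⱼ, Vⱼ)`
that of `(Sⱼ, R₂)`; hence `I(R₁;Xⱼ|Vⱼ) − I(R₁;Yⱼ|Vⱼ) = H(R₁|Sⱼ,R₂) − H(R₁|S_{j+1},R₂)`, and these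
differences telescope over `j` to the left-hand side. Since `J` is uniform, independent of the
data and readable from `V`, the law of each tuple entering `I(·;·|V)` is the uniform mixture of
its laws at the fixed indices `j`, with disjoint supports. So each of its entropies is `log n` plus
the average of the entropies at fixed `j`, and `I(R₁;X_J|V)` is the average of the `I(R₁;Xⱼ|Vⱼ)`.
-/

section Entropy

variable {Ω α β : Type*} [Fintype Ω]

lemma IsPMF.nonempty {μ : Ω → ℝ} (hμ : IsPMF μ) : Nonempty Ω := by
  by_contra h
  simpa [not_nonempty_iff.mp h] using hμ.2

variable (μ : Ω → ℝ)

lemma dist_comp [Fintype α] (Z : Ω → α) (f : α → β) (c : β) :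
    dist μ (fun ω => f (Z ω)) c = ∑ a, if f a = c then dist μ Z a else 0 := by
  simp only [dist]
  rw [← Finset.sum_fiberwise Finset.univ Z]
  refine Finset.sum_congr rfl fun a _ => ?_
  rw [Finset.sum_filter]
  split_ifs with h
  · exact Finset.sum_congr rfl fun ω _ => by split_ifs with hω <;> simp_all
  · exact Finset.sum_eq_zero fun ω _ => by split_ifs with hω <;> simp_all

lemma sum_dist [Fintype α] (Z : Ω → α) : ∑ a, dist μ Z a = ∑ ω, μ ω := by
  simp only [dist]
  rw [Finset.sum_comm]
  simp

lemma H_comp_of_injective [Fintype α] [Fintype β] (Z : Ω → α) {f : α → β}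
    (hf : Function.Injective f) : H μ (fun ω => f (Z ω)) = H μ Z := by
  have hdist : ∀ a, dist μ (fun ω => f (Z ω)) (f a) = dist μ Z a := fun a => by
    simp [dist, hf.eq_iff]
  have hzero : ∀ b ∉ Set.range f, dist μ (fun ω => f (Z ω)) b = 0 := fun b hb =>
    Finset.sum_eq_zero fun ω _ => if_neg fun h => hb ⟨Z ω, h⟩
  simp only [H, entPMF, neg_inj]
  exact (Fintype.sum_of_injective f hf _ _ (fun b hb => by simp [hzero b hb])
    (fun a => by rw [hdist])).symm

lemma H_comp_of_injOn [Fintype α] [Fintype β] (Z : Ω → α) {f : α → β}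
    (hf : Set.InjOn f (Set.range Z)) : H μ (fun ω => f (Z ω)) = H μ Z := by
  have hval := H_comp_of_injective μ (Set.rangeFactorization Z) Subtype.val_injective
  have hf' := H_comp_of_injective μ (Set.rangeFactorization Z) hf.injective
  exact hf'.trans hval.symm

lemma H_comp_eq_of_fibers [Fintype α] [Fintype β] {τ : Type*} (T : Ω → τ) {Φ : τ → α}
    {Ψ : τ → β} (h : ∀ t t', Φ t = Φ t' ↔ Ψ t = Ψ t') :
    H μ (fun ω => Φ (T ω)) = H μ (fun ω => Ψ (T ω)) := by
  have hfst := H_comp_of_injOn μ (fun ω => (Φ (T ω), Ψ (T ω))) (f := Prod.fst) <| by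
    rintro _ ⟨ω, rfl⟩ _ ⟨ω', rfl⟩ (e : Φ _ = Φ _)
    simp [e, (h _ _).mp e]
  have hsnd := H_comp_of_injOn μ (fun ω => (Φ (T ω), Ψ (T ω))) (f := Prod.snd) <| by
    rintro _ ⟨ω, rfl⟩ _ ⟨ω', rfl⟩ (e : Ψ _ = Ψ _)
    simp [e, (h _ _).mpr e]
  exact hfst.trans hsnd.symm

end Entropy

lemma entPMF_uniform_mixture {γ : Type*} [Fintype γ] {n : ℕ} (hn : 0 < n)
    (p : Fin n → γ → ℝ) (hp : ∀ j, ∑ c, p j c = 1) (π : γ → Fin n)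
    (hπ : ∀ j c, p j c ≠ 0 → π c = j) :
    entPMF (fun c => (1 / (n : ℝ)) * ∑ j, p j c)
      = Real.logb 2 n + (1 / (n : ℝ)) * ∑ j, entPMF (p j) := by
  have hn' : (n : ℝ) ≠ 0 := by positivity
  have hpπ : ∀ j c, j ≠ π c → p j c = 0 := fun j c hj => by
    by_contra h; exact hj (hπ j c h).symm
  -- `x ↦ x log x` vanishes at `0`, and at each point at most one summand is nonzero
  have hmix : ∀ c, (1 / (n : ℝ)) * (∑ j, p j c) * Real.logb 2 ((1 / (n : ℝ)) * ∑ j, p j c)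
      = ∑ j, (1 / (n : ℝ)) * (p j c * Real.logb 2 (p j c) - p j c * Real.logb 2 n) := by
    intro c
    rw [Fintype.sum_eq_single (π c) fun j hj => by simp [hpπ j c hj],
      Fintype.sum_eq_single (π c) fun j hj => by simp [hpπ j c hj]]
    rcases eq_or_ne (p (π c) c) 0 with h | h
    · simp [h]
    · rw [Real.logb_mul (by positivity) h, one_div, Real.logb_inv]; ring
  simp only [entPMF, hmix]
  rw [Finset.sum_comm]
  simp only [← Finset.mul_sum, Finset.sum_sub_distrib, ← Finset.sum_mul, hp]
  field_simp
  simp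
  ring

section UniformIndex

variable {Ω τ γ : Type*} [Fintype Ω] [Fintype τ] {n : ℕ}
  (μ : Ω → ℝ) (J : Ω → Fin n) (T : Ω → τ)

lemma dist_uniform_index
    (hJ : ∀ j t, dist μ (fun ω => (J ω, T ω)) (j, t) = (1 / (n : ℝ)) * dist μ T t)
    (G : Fin n → τ → γ) (c : γ) :
    dist μ (fun ω => G (J ω) (T ω)) c = (1 / (n : ℝ)) * ∑ j, dist μ (fun ω => G j (T ω)) c := by
  rw [dist_comp μ (fun ω => (J ω, T ω)) (fun a => G a.1 a.2), Fintype.sum_prod_type,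
    Finset.mul_sum]
  refine Finset.sum_congr rfl fun j _ => ?_
  rw [dist_comp μ T (G j), Finset.mul_sum]
  simp only [hJ, mul_ite, mul_zero]

variable [Fintype γ]

lemma H_uniform_index (hμ : IsPMF μ)
    (hJ : ∀ j t, dist μ (fun ω => (J ω, T ω)) (j, t) = (1 / (n : ℝ)) * dist μ T t)
    (G : Fin n → τ → γ) (π : γ → Fin n) (hπ : ∀ j t, π (G j t) = j) :
    H μ (fun ω => G (J ω) (T ω))
      = Real.logb 2 n + (1 / (n : ℝ)) * ∑ j, H μ (fun ω => G j (T ω)) := by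
  have hn : 0 < n := (J hμ.nonempty.some).pos
  have hsupp : ∀ j c, dist μ (fun ω => G j (T ω)) c ≠ 0 → π c = j := fun j c hc => by
    obtain ⟨ω, -, hω⟩ := Finset.exists_ne_zero_of_sum_ne_zero hc
    rw [← (ite_ne_right_iff.mp hω).1, hπ]
  simp only [H, funext (dist_uniform_index μ J T hJ G)]
  exact entPMF_uniform_mixture hn _ (fun j => (sum_dist μ _).trans hμ.2) π hsupp

variable {α β : Type*} [Fintype α] [Fintype β]

lemma condMI_uniform_index (hμ : IsPMF μ)
    (hJ : ∀ j t, dist μ (fun ω => (J ω, T ω)) (j, t) = (1 / (n : ℝ)) * dist μ T t)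
    (F : τ → α) (G : Fin n → τ → β) (K : Fin n → τ → γ) (π : γ → Fin n)
    (hπ : ∀ j t, π (K j t) = j) :
    condMI μ (fun ω => F (T ω)) (fun ω => G (J ω) (T ω)) (fun ω => K (J ω) (T ω))
      = (1 / (n : ℝ)) * ∑ j, condMI μ (fun ω => F (T ω)) (fun ω => G j (T ω))
          (fun ω => K j (T ω)) := by
  simp only [condMI]
  rw [H_uniform_index μ J T hμ hJ (fun j t => (F t, K j t)) (fun z => π z.2) fun j t => hπ j t,
    H_uniform_index μ J T hμ hJ (fun j t => (G j t, K j t)) (fun z => π z.2) fun j t => hπ j t,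
    H_uniform_index μ J T hμ hJ (fun j t => (F t, G j t, K j t)) (fun z => π z.2.2)
      fun j t => hπ j t,
    H_uniform_index μ J T hμ hJ K π hπ]
  simp only [Finset.sum_sub_distrib, Finset.sum_add_distrib]
  ring

end UniformIndex

section Splice

variable {𝒳 𝒴 : Type} {n : ℕ}

def splice (x : Fin n → 𝒳) (y : Fin n → 𝒴) (k : ℕ) : Fin n → 𝒳 ⊕ 𝒴 :=
  fun i => if (i : ℕ) < k then .inl (x i) else .inr (y i)

variable {x x' : Fin n → 𝒳} {y y' : Fin n → 𝒴}

lemma splice_eq_splice_iff {k : ℕ} :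
    splice x y k = splice x' y' k ↔
      (∀ i : Fin n, (i : ℕ) < k → x i = x' i) ∧ ∀ i : Fin n, k ≤ (i : ℕ) → y i = y' i := by
  simp only [splice, funext_iff]
  constructor
  · intro h
    refine ⟨fun i hi => ?_, fun i hi => ?_⟩ <;> simpa [hi, not_lt.mpr] using h i
  · rintro ⟨hx, hy⟩ i
    split_ifs with hi
    · rw [hx i hi]
    · rw [hy i (not_lt.mp hi)]

lemma maskPre_eq_maskPre_iff {j : Fin n} :
    maskPre x j = maskPre x' j ↔ ∀ i : Fin n, (i : ℕ) < j → x i = x' i := by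
  simp only [maskPre, funext_iff]
  refine forall_congr' fun i => ?_
  by_cases hi : (i : ℕ) < j <;> simp [hi]

lemma maskSuf_eq_maskSuf_iff {j : Fin n} :
    maskSuf y j = maskSuf y' j ↔ ∀ i : Fin n, (j : ℕ) < i → y i = y' i := by
  simp only [maskSuf, funext_iff]
  refine forall_congr' fun i => ?_
  by_cases hi : (j : ℕ) < i <;> simp [hi]

lemma splice_zero_eq_splice_zero_iff : splice x y 0 = splice x' y' 0 ↔ y = y' := by
  rw [splice_eq_splice_iff, funext_iff]
  simp

lemma splice_self_eq_splice_self_iff : splice x y n = splice x' y' n ↔ x = x' := by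
  rw [splice_eq_splice_iff, funext_iff]
  simp [Fin.is_lt, not_le.mpr]

lemma splice_val_eq_splice_val_iff {j : Fin n} :
    splice x y j = splice x' y' j ↔
      y j = y' j ∧ maskPre x j = maskPre x' j ∧ maskSuf y j = maskSuf y' j := by
  simp only [splice_eq_splice_iff, maskPre_eq_maskPre_iff, maskSuf_eq_maskSuf_iff]
  constructor
  · rintro ⟨hx, hy⟩
    exact ⟨hy j le_rfl, hx, fun i hi => hy i hi.le⟩
  · rintro ⟨hj, hx, hy⟩
    refine ⟨hx, fun i hi => ?_⟩
    rcases hi.lt_or_eq with hi | hi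
    · exact hy i hi
    · rwa [Fin.val_injective hi] at hj

lemma splice_succ_eq_splice_succ_iff {j : Fin n} :
    splice x y (j + 1) = splice x' y' (j + 1) ↔
      x j = x' j ∧ maskPre x j = maskPre x' j ∧ maskSuf y j = maskSuf y' j := by
  simp only [splice_eq_splice_iff, maskPre_eq_maskPre_iff, maskSuf_eq_maskSuf_iff,
    Nat.lt_succ_iff, Nat.succ_le_iff]
  constructor
  · rintro ⟨hx, hy⟩
    exact ⟨hx j le_rfl, fun i hi => hx i hi.le, hy⟩
  · rintro ⟨hj, hx, hy⟩
    refine ⟨fun i hi => ?_, hy⟩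
    rcases hi.lt_or_eq with hi | hi
    · exact hx i hi
    · rwa [Fin.val_injective hi]

end Splice

section ConditionalEntropy

variable {Ω ρ τ α β : Type*} [Fintype Ω] [Fintype ρ] [Fintype α] [Fintype β] (μ : Ω → ℝ)

lemma condH_congr_of_fibers (R : Ω → ρ) (T : Ω → τ) {Φ : τ → α} {Ψ : τ → β}
    (h : ∀ t t', Φ t = Φ t' ↔ Ψ t = Ψ t') :
    condH μ R (fun ω => Φ (T ω)) = condH μ R (fun ω => Ψ (T ω)) := by
  simp only [condH]
  rw [H_comp_eq_of_fibers μ T h, H_comp_eq_of_fibers μ (fun ω => (R ω, T ω))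
    (Φ := fun p => (p.1, Φ p.2)) (Ψ := fun p => (p.1, Ψ p.2)) (by simp [Prod.ext_iff, h])]

lemma condMI_sub_condMI {γ : Type*} [Fintype γ] (R : Ω → ρ) (Z : Ω → α) (Z' : Ω → β)
    (W : Ω → γ) :
    condMI μ R Z W - condMI μ R Z' W
      = condH μ R (fun ω => (Z' ω, W ω)) - condH μ R (fun ω => (Z ω, W ω)) := by
  simp only [condMI, condH]
  ring

end ConditionalEntropy

section Hybrid

variable {Ω ρ B : Type*} {𝒳 𝒴 : Type} [Fintype Ω] [Fintype ρ] [Fintype B] [Fintype 𝒳] [Fintype 𝒴]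
  {n : ℕ}
  (μ : Ω → ℝ) (R : Ω → ρ) (S : Ω → B) (X : Ω → Fin n → 𝒳) (Y : Ω → Fin n → 𝒴)

lemma condH_splice_zero :
    condH μ R (fun ω => (splice (X ω) (Y ω) 0, S ω)) = condH μ R (fun ω => (Y ω, S ω)) :=
  condH_congr_of_fibers μ R (fun ω => (X ω, Y ω, S ω))
    (Φ := fun t => (splice t.1 t.2.1 0, t.2.2)) (Ψ := fun t => (t.2.1, t.2.2))
    (by simp [Prod.ext_iff, splice_zero_eq_splice_zero_iff])

lemma condH_splice_self :
    condH μ R (fun ω => (splice (X ω) (Y ω) n, S ω)) = condH μ R (fun ω => (X ω, S ω)) :=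
  condH_congr_of_fibers μ R (fun ω => (X ω, Y ω, S ω))
    (Φ := fun t => (splice t.1 t.2.1 n, t.2.2)) (Ψ := fun t => (t.1, t.2.2))
    (by simp [Prod.ext_iff, splice_self_eq_splice_self_iff])

lemma condH_splice_val (j : Fin n) :
    condH μ R (fun ω => (splice (X ω) (Y ω) j, S ω))
      = condH μ R (fun ω => (Y ω j, maskPre (X ω) j, maskSuf (Y ω) j, S ω, j)) :=
  condH_congr_of_fibers μ R (fun ω => (X ω, Y ω, S ω))
    (Φ := fun t => (splice t.1 t.2.1 j, t.2.2))
    (Ψ := fun t => (t.2.1 j, maskPre t.1 j, maskSuf t.2.1 j, t.2.2, j))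
    (by simp [Prod.ext_iff, splice_val_eq_splice_val_iff, and_assoc])

lemma condH_splice_succ (j : Fin n) :
    condH μ R (fun ω => (splice (X ω) (Y ω) (j + 1), S ω))
      = condH μ R (fun ω => (X ω j, maskPre (X ω) j, maskSuf (Y ω) j, S ω, j)) :=
  condH_congr_of_fibers μ R (fun ω => (X ω, Y ω, S ω))
    (Φ := fun t => (splice t.1 t.2.1 (j + 1), t.2.2))
    (Ψ := fun t => (t.1 j, maskPre t.1 j, maskSuf t.2.1 j, t.2.2, j))
    (by simp [Prod.ext_iff, splice_succ_eq_splice_succ_iff, and_assoc])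

end Hybrid

/-- Uniform-index form of Lemma 1 (second equality of Lemma 17.12 of
Csiszár–Körner): with `J` uniform on `{1,…,n}` and independent of
`(R₁,R₂,X^n,Y^n)`, and `V = (X^{J−1}, Y_{J+1}^n, R₂, J)`,
`I(R₁;X^n|R₂) − I(R₁;Y^n|R₂) = n·[I(R₁;X_J|V) − I(R₁;Y_J|V)]`. -/
theorem uniform_index_mutual_information_identity
    {Ω A B 𝒳 𝒴 : Type} [Fintype Ω] [Fintype A] [Fintype B] [Fintype 𝒳] [Fintype 𝒴]
    (μ : Ω → ℝ) (hμ : IsPMF μ) {n : ℕ}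
    (R₁ : Ω → A) (R₂ : Ω → B) (X : Ω → Fin n → 𝒳) (Y : Ω → Fin n → 𝒴)
    (J : Ω → Fin n)
    (hJ : ∀ (j : Fin n) (t : A × B × (Fin n → 𝒳) × (Fin n → 𝒴)),
      dist μ (fun ω => (J ω, R₁ ω, R₂ ω, X ω, Y ω)) (j, t)
        = (1 / (n : ℝ)) * dist μ (fun ω => (R₁ ω, R₂ ω, X ω, Y ω)) t) :
    condMI μ R₁ X R₂ - condMI μ R₁ Y R₂ =
      (n : ℝ) * (condMI μ R₁ (fun ω => X ω (J ω))
            (fun ω => (maskPre (X ω) (J ω), maskSuf (Y ω) (J ω), R₂ ω, J ω))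
        - condMI μ R₁ (fun ω => Y ω (J ω))
            (fun ω => (maskPre (X ω) (J ω), maskSuf (Y ω) (J ω), R₂ ω, J ω))) := by
  have hn : (n : ℝ) ≠ 0 := by have := (J hμ.nonempty.some).pos; positivity
  let φ : ℕ → ℝ := fun k => condH μ R₁ (fun ω => (splice (X ω) (Y ω) k, R₂ ω))
  have step : ∀ j : Fin n,
      condMI μ R₁ (fun ω => X ω j) (fun ω => (maskPre (X ω) j, maskSuf (Y ω) j, R₂ ω, j))
        - condMI μ R₁ (fun ω => Y ω j) (fun ω => (maskPre (X ω) j, maskSuf (Y ω) j, R₂ ω, j))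
        = φ j - φ (j + 1) := fun j => by
    rw [condMI_sub_condMI, ← condH_splice_val μ R₁ R₂ X Y, ← condH_splice_succ μ R₁ R₂ X Y]
  have ends : condMI μ R₁ X R₂ - condMI μ R₁ Y R₂ = φ 0 - φ n := by
    rw [condMI_sub_condMI, ← condH_splice_zero μ R₁ R₂ X Y, ← condH_splice_self μ R₁ R₂ X Y]
  rw [ends, condMI_uniform_index μ J (fun ω => (R₁ ω, R₂ ω, X ω, Y ω)) hμ hJ (fun t => t.1)
      (fun j t => t.2.2.1 j) (fun j t => (maskPre t.2.2.1 j, maskSuf t.2.2.2 j, t.2.1, j))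
      (fun v => v.2.2.2) fun _ _ => rfl,
    condMI_uniform_index μ J (fun ω => (R₁ ω, R₂ ω, X ω, Y ω)) hμ hJ (fun t => t.1)
      (fun j t => t.2.2.2 j) (fun j t => (maskPre t.2.2.1 j, maskSuf t.2.2.2 j, t.2.1, j))
      (fun v => v.2.2.2) fun _ _ => rfl,
    ← mul_sub, ← Finset.sum_sub_distrib, Fintype.sum_congr _ _ step,
    Fin.sum_univ_eq_sum_range (fun k => φ k - φ (k + 1)), Finset.sum_range_sub']
  field_simp

end CRGen
end
end
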